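/- arXiv:1006.5128 — 5 statements merged into one kernel-verified Lean document; each statement's English description precedes it below -/
import Mathlib

section
/- In any strongly Gelfand quantale Q (a unital involutive quantale satisfying a ≤ a·a*·a for all a), the subquantale Q_e = {c ∈ Q : c ≤ e} is a frame in which the involution restricts to the identity and the product restricts to binary meet. -/
/-- A unital involutive quantale: a complete lattice with a monoid structure whose
multiplication distributes over arbitrary joins in each coordinate, and an
involution `star` satisfying `(a*b)* = b* * a*`, `a** = a`, preserving joins.
The multiplicative unit `1` plays the role of `e`. -/
class UIQuantale (Q : Type*) extends CompleteLattice Q, Monoid Q, StarMul Q where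
  mul_sSup : ∀ (a : Q) (s : Set Q), a * sSup s = ⨆ b ∈ s, a * b
  sSup_mul : ∀ (a : Q) (s : Set Q), sSup s * a = ⨆ b ∈ s, b * a
  star_sSup : ∀ (s : Set Q), star (sSup s) = ⨆ b ∈ s, star b

section aux
variable {Q : Type*} [UIQuantale Q]

lemma UIQ.mul_le_mul_right' {a b : Q} (h : a ≤ b) (c : Q) : a * c ≤ b * c := by
  have hs : sSup ({a, b} : Set Q) = b := by
    rw [sSup_pair]; exact sup_eq_right.mpr h
  calc a * c ≤ ⨆ x ∈ ({a, b} : Set Q), x * c :=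
    le_biSup (fun x => x * c) (Set.mem_insert a {b})
    _ = b * c := by rw [← UIQuantale.sSup_mul, hs]

lemma UIQ.mul_le_mul_left' {a b : Q} (h : a ≤ b) (c : Q) : c * a ≤ c * b := by
  have hs : sSup ({a, b} : Set Q) = b := by
    rw [sSup_pair]; exact sup_eq_right.mpr h
  calc c * a ≤ ⨆ x ∈ ({a, b} : Set Q), c * x :=
    le_biSup (fun x => c * x) (Set.mem_insert a {b})
    _ = c * b := by rw [← UIQuantale.mul_sSup, hs]

lemma UIQ.star_mono {a b : Q} (h : a ≤ b) : star a ≤ star b := by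
  have hs : sSup ({a, b} : Set Q) = b := by
    rw [sSup_pair]; exact sup_eq_right.mpr h
  calc star a ≤ ⨆ x ∈ ({a, b} : Set Q), star x :=
    le_biSup (fun x => star x) (Set.mem_insert a {b})
    _ = star b := by rw [← UIQuantale.star_sSup, hs]

end aux

/-- In any strongly Gelfand quantale, Q_e = {c : c ≤ e} is a frame in which the
involution is the identity and the product is binary meet. -/
theorem stmt0 (Q : Type*) [UIQuantale Q] (sg : ∀ a : Q, a ≤ a * star a * a) :
    (∀ c : Q, c ≤ 1 → star c = c) ∧
    (∀ c d : Q, c ≤ 1 → d ≤ 1 → c * d = c ⊓ d) ∧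
    (∀ (a : Q) (S : Set Q), a ≤ 1 → (∀ b ∈ S, b ≤ 1) →
      a ⊓ sSup S = ⨆ b ∈ S, a ⊓ b) := by
  have key : ∀ c : Q, c ≤ 1 → c ≤ star c := by
    intro c hc
    calc c ≤ c * star c * c := sg c
      _ ≤ c * star c * 1 := UIQ.mul_le_mul_left' hc _
      _ ≤ 1 * star c * 1 := UIQ.mul_le_mul_right' (UIQ.mul_le_mul_right' hc _) 1
      _ = star c := by rw [one_mul, mul_one]
  have hstar : ∀ c : Q, c ≤ 1 → star c = c := by
    intro c hc
    have h1 : star c ≤ 1 := by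
      have := UIQ.star_mono (Q := Q) hc
      rwa [star_one] at this
    have h2 : star c ≤ star (star c) := key _ h1
    rw [star_star] at h2
    exact le_antisymm h2 (key c hc)
  have hmul : ∀ c d : Q, c ≤ 1 → d ≤ 1 → c * d = c ⊓ d := by
    intro c d hc hd
    apply le_antisymm
    · exact le_inf ((UIQ.mul_le_mul_left' hd c).trans (le_of_eq (mul_one c)))
        ((UIQ.mul_le_mul_right' hc d).trans (le_of_eq (one_mul d)))
    · set a := c ⊓ d with ha
      have haa : a ≤ 1 := le_trans inf_le_left hc
      calc a ≤ a * star a * a := sg a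
        _ = a * a * a := by rw [hstar a haa]
        _ ≤ a * a * 1 := UIQ.mul_le_mul_left' haa _
        _ ≤ c * d * 1 := UIQ.mul_le_mul_right' ((UIQ.mul_le_mul_right' inf_le_left a).trans (UIQ.mul_le_mul_left' inf_le_right c)) 1
        _ = c * d := mul_one _
  refine ⟨hstar, hmul, ?_⟩
  intro a S ha hS
  have hsS : sSup S ≤ 1 := sSup_le hS
  calc a ⊓ sSup S = a * sSup S := (hmul a _ ha hsS).symm
    _ = ⨆ b ∈ S, a * b := UIQuantale.mul_sSup a S
    _ = ⨆ b ∈ S, a ⊓ b := by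
        apply iSup_congr; intro b
        by_cases hb : b ∈ S
        · simp [hb, hmul a b ha (hS b hb)]
        · simp [hb]
end

section
/- In a strongly Gelfand quantale, for every h ≤ e and every partial unit f, one has h·f = f·(f*·h·f) and f*·h = (f*·h·f)·f*. -/
namespace UIQHelp
variable {Q : Type*} [UIQuantale Q]

lemma mul_sup (a b c : Q) : a * (b ⊔ c) = (a * b) ⊔ (a * c) := by
  have := UIQuantale.mul_sSup a {b, c}
  rw [sSup_pair, iSup_pair] at this
  exact this

lemma sup_mul (a b c : Q) : (b ⊔ c) * a = (b * a) ⊔ (c * a) := by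
  have := UIQuantale.sSup_mul a {b, c}
  rw [sSup_pair, iSup_pair] at this
  exact this

lemma mul_le_mul_left' {a b : Q} (hab : a ≤ b) (c : Q) : c * a ≤ c * b := by
  have : c * (a ⊔ b) = (c * a) ⊔ (c * b) := mul_sup c a b
  rw [sup_eq_right.2 hab] at this
  rw [this]; exact le_sup_left

lemma mul_le_mul_right' {a b : Q} (hab : a ≤ b) (c : Q) : a * c ≤ b * c := by
  have : (a ⊔ b) * c = (a * c) ⊔ (b * c) := sup_mul c a b
  rw [sup_eq_right.2 hab] at this
  rw [this]; exact le_sup_left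

lemma star_mono {a b : Q} (hab : a ≤ b) : star a ≤ star b := by
  have := UIQuantale.star_sSup ({a, b} : Set Q)
  rw [sSup_insert, sSup_singleton, sup_eq_right.2 hab] at this
  simp only [iSup_insert, iSup_singleton] at this
  rw [this]; exact le_sup_left

end UIQHelp

open UIQHelp in
theorem stmt4 (Q : Type*) [UIQuantale Q] (sg : ∀ a : Q, a ≤ a * star a * a)
    (h f : Q) (hh : h ≤ 1) (hf : star f * f ≤ 1) (hf' : f * star f ≤ 1) :
    h * f = f * (star f * h * f) ∧ star f * h = (star f * h * f) * star f := by
  have hhs : star h ≤ 1 := by simpa using star_mono hh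
  have hsh : star h * h ≤ h := by
    calc star h * h ≤ 1 * h := mul_le_mul_right' hhs h
    _ = h := one_mul h
  have hhs' : h * star h ≤ h := by
    calc h * star h ≤ h * 1 := mul_le_mul_left' hhs h
    _ = h := mul_one h
  constructor
  · apply le_antisymm
    · calc h * f ≤ (h * f) * star (h * f) * (h * f) := sg _
        _ = h * (f * star f) * (star h * h) * f := by
            rw [star_mul]; simp only [mul_assoc]
        _ ≤ h * (f * star f) * h * f := mul_le_mul_right' (mul_le_mul_left' hsh _) f
        _ ≤ 1 * (f * star f) * h * f :=
            mul_le_mul_right' (mul_le_mul_right' (mul_le_mul_right' hh _) _) f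
        _ = f * (star f * h * f) := by rw [one_mul]; simp only [mul_assoc]
    · calc f * (star f * h * f) = (f * star f) * (h * f) := by simp only [mul_assoc]
        _ ≤ 1 * (h * f) := mul_le_mul_right' hf' _
        _ = h * f := one_mul _
  · apply le_antisymm
    · calc star f * h ≤ (star f * h) * star (star f * h) * (star f * h) := sg _
        _ = star f * (h * star h) * (f * star f) * h := by
            rw [star_mul, star_star]; simp only [mul_assoc]
        _ ≤ star f * h * (f * star f) * h :=
            mul_le_mul_right' (mul_le_mul_right' (mul_le_mul_left' hhs' _) _) h
        _ ≤ star f * h * (f * star f) * 1 := mul_le_mul_left' hh _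
        _ = (star f * h * f) * star f := by rw [mul_one]; simp only [mul_assoc]
    · calc (star f * h * f) * star f = (star f * h) * (f * star f) := by simp only [mul_assoc]
        _ ≤ (star f * h) * 1 := mul_le_mul_left' hf' _
        _ = star f * h := mul_one _
end

section
/- For any set groupoid G, the powerset P(G₁) equipped with arbitrary unions, the lifted product S·T = {x·y : x ∈ S, y ∈ T, r(x) = d(y)}, the lifted involution S* = {x⁻¹ : x ∈ S}, and unit E = u[G₀], is a strongly Gelfand quantale (i.e., a unital involutive quantale satisfying S ⊆ S·S*·S for all S). -/
/-- A set groupoid `(G₀, G₁, m, d, r, u, i)`.  The multiplication is given as a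
total function, but all axioms involving `mul x y` are conditional on the
product being defined, i.e. on `r x = d y`. -/
structure SetGroupoid (G₀ : Type*) (G₁ : Type*) where
  d : G₁ → G₀
  r : G₁ → G₀
  u : G₀ → G₁
  mul : G₁ → G₁ → G₁
  inv : G₁ → G₁
  d_u : ∀ p, d (u p) = p
  r_u : ∀ p, r (u p) = p
  d_mul : ∀ x y, r x = d y → d (mul x y) = d x
  r_mul : ∀ x y, r x = d y → r (mul x y) = r y
  mul_assoc : ∀ x y z, r x = d y → r y = d z → mul (mul x y) z = mul x (mul y z)
  mul_u : ∀ x, mul x (u (r x)) = x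
  u_mul : ∀ x, mul (u (d x)) x = x
  mul_inv : ∀ x, mul x (inv x) = u (d x)
  inv_mul : ∀ x, mul (inv x) x = u (r x)
  d_inv : ∀ x, d (inv x) = r x
  r_inv : ∀ x, r (inv x) = d x

/-- The lifted product on the powerset of arrows. -/
def gpdMul {G₀ G₁ : Type*} (G : SetGroupoid G₀ G₁) (S T : Set G₁) : Set G₁ :=
  {z | ∃ x ∈ S, ∃ y ∈ T, G.r x = G.d y ∧ z = G.mul x y}

/-- The lifted involution on the powerset of arrows. -/
def gpdStar {G₀ G₁ : Type*} (G : SetGroupoid G₀ G₁) (S : Set G₁) : Set G₁ :=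
  G.inv '' S

/-- The unit: the image of the unit map. -/
def gpdE {G₀ G₁ : Type*} (G : SetGroupoid G₀ G₁) : Set G₁ :=
  Set.range G.u

section Helpers
variable {G₀ G₁ : Type*} (G : SetGroupoid G₀ G₁)

theorem ginv_unique (a b : G₁) (h : G.r a = G.d b) (hab : G.mul a b = G.u (G.d a)) :
    b = G.inv a := by
  have h1 : b = G.mul (G.u (G.d b)) b := (G.u_mul b).symm
  rw [h1, ← h, ← G.inv_mul a, G.mul_assoc _ _ _ (by rw [G.r_inv]) h, hab,
    ← G.r_inv a, G.mul_u]

theorem ginv_inv (x : G₁) : G.inv (G.inv x) = x := by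
  have := ginv_unique G (G.inv x) x (G.r_inv x) (by simp [G.inv_mul, G.d_inv])
  exact this.symm

theorem ginv_mul_eq (x y : G₁) (h : G.r x = G.d y) :
    G.inv (G.mul x y) = G.mul (G.inv y) (G.inv x) := by
  have hry : G.r y = G.d (G.inv y) := (G.d_inv y).symm
  have hiy : G.r (G.inv y) = G.d (G.inv x) := by rw [G.r_inv, G.d_inv, h]
  refine (ginv_unique G (G.mul x y) (G.mul (G.inv y) (G.inv x)) ?_ ?_).symm
  · simp [G.r_mul _ _ h, G.d_mul _ _ hiy, G.d_inv, h]
  · rw [← G.mul_assoc (G.mul x y) (G.inv y) (G.inv x) (by rw [G.r_mul _ _ h, hry]) hiy,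
      G.mul_assoc x y (G.inv y) h hry, G.mul_inv y, ← h, G.mul_u, G.mul_inv, G.d_mul _ _ h]
end Helpers

/-- For any set groupoid, the powerset of `G₁` with arbitrary unions, the lifted
product, the lifted involution and unit `E = u[G₀]` is a strongly Gelfand quantale:
the product is associative and unital, distributes over arbitrary unions in each
coordinate, the involution is an anti-homomorphism of period two preserving unions,
and `S ⊆ S·S*·S` for every `S`. -/


theorem stmt9 {G₀ G₁ : Type*} (G : SetGroupoid G₀ G₁) :
    (∀ S T U : Set G₁, gpdMul G (gpdMul G S T) U = gpdMul G S (gpdMul G T U)) ∧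
    (∀ S : Set G₁, gpdMul G (gpdE G) S = S ∧ gpdMul G S (gpdE G) = S) ∧
    (∀ (S : Set G₁) (𝒮 : Set (Set G₁)),
        gpdMul G S (⋃₀ 𝒮) = ⋃ T ∈ 𝒮, gpdMul G S T) ∧
    (∀ (S : Set G₁) (𝒮 : Set (Set G₁)),
        gpdMul G (⋃₀ 𝒮) S = ⋃ T ∈ 𝒮, gpdMul G T S) ∧
    (∀ S : Set G₁, gpdStar G (gpdStar G S) = S) ∧
    (∀ S T : Set G₁, gpdStar G (gpdMul G S T) = gpdMul G (gpdStar G T) (gpdStar G S)) ∧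
    (∀ 𝒮 : Set (Set G₁), gpdStar G (⋃₀ 𝒮) = ⋃ T ∈ 𝒮, gpdStar G T) ∧
    (∀ S : Set G₁, S ⊆ gpdMul G (gpdMul G S (gpdStar G S)) S) := by
  refine ⟨?_, ?_, ?_, ?_, ?_, ?_, ?_, ?_⟩
  · intro S T U
    ext z
    constructor
    · rintro ⟨w, ⟨x, hx, y, hy, hxy, rfl⟩, u, hu, hwu, rfl⟩
      rw [G.r_mul _ _ hxy] at hwu
      exact ⟨x, hx, G.mul y u, ⟨y, hy, u, hu, hwu, rfl⟩,
        by rw [G.d_mul _ _ hwu]; exact hxy, G.mul_assoc _ _ _ hxy hwu⟩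
    · rintro ⟨x, hx, w, ⟨y, hy, u, hu, hyu, rfl⟩, hxw, rfl⟩
      rw [G.d_mul _ _ hyu] at hxw
      exact ⟨G.mul x y, ⟨x, hx, y, hy, hxw, rfl⟩, u, hu,
        by rw [G.r_mul _ _ hxw]; exact hyu, (G.mul_assoc _ _ _ hxw hyu).symm⟩
  · intro S
    constructor
    · ext z
      constructor
      · rintro ⟨x, ⟨p, rfl⟩, y, hy, hxy, rfl⟩
        rw [G.r_u] at hxy; subst hxy; rwa [G.u_mul]
      · intro hz
        exact ⟨G.u (G.d z), ⟨_, rfl⟩, z, hz, by rw [G.r_u], (G.u_mul z).symm⟩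
    · ext z
      constructor
      · rintro ⟨x, hx, y, ⟨p, rfl⟩, hxy, rfl⟩
        rw [G.d_u] at hxy; subst hxy; rwa [G.mul_u]
      · intro hz
        exact ⟨z, hz, G.u (G.r z), ⟨_, rfl⟩, by rw [G.d_u], (G.mul_u z).symm⟩
  · intro S 𝒮
    ext z
    simp only [gpdMul, Set.mem_sUnion, Set.mem_iUnion, Set.mem_setOf_eq]
    constructor
    · rintro ⟨x, hx, y, ⟨T, hT, hy⟩, h, rfl⟩
      exact ⟨T, hT, x, hx, y, hy, h, rfl⟩
    · rintro ⟨T, hT, x, hx, y, hy, h, rfl⟩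
      exact ⟨x, hx, y, ⟨T, hT, hy⟩, h, rfl⟩
  · intro S 𝒮
    ext z
    simp only [gpdMul, Set.mem_sUnion, Set.mem_iUnion, Set.mem_setOf_eq]
    constructor
    · rintro ⟨x, ⟨T, hT, hx⟩, y, hy, h, rfl⟩
      exact ⟨T, hT, x, hx, y, hy, h, rfl⟩
    · rintro ⟨T, hT, x, hx, y, hy, h, rfl⟩
      exact ⟨x, ⟨T, hT, hx⟩, y, hy, h, rfl⟩
  · intro S
    ext z
    simp only [gpdStar, Set.mem_image]
    constructor
    · rintro ⟨x, ⟨y, hy, rfl⟩, rfl⟩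
      rwa [ginv_inv]
    · intro hz
      exact ⟨G.inv z, ⟨z, hz, rfl⟩, ginv_inv G z⟩
  · intro S T
    ext z
    simp only [gpdStar, gpdMul, Set.mem_image, Set.mem_setOf_eq]
    constructor
    · rintro ⟨w, ⟨x, hx, y, hy, h, rfl⟩, rfl⟩
      exact ⟨G.inv y, ⟨y, hy, rfl⟩, G.inv x, ⟨x, hx, rfl⟩,
        by rw [G.r_inv, G.d_inv, h], ginv_mul_eq G x y h⟩
    · rintro ⟨a, ⟨y, hy, rfl⟩, b, ⟨x, hx, rfl⟩, h, rfl⟩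
      rw [G.r_inv, G.d_inv] at h
      exact ⟨G.mul x y, ⟨x, hx, y, hy, h.symm, rfl⟩, ginv_mul_eq G x y h.symm⟩
  · intro 𝒮
    ext z
    constructor
    · rintro ⟨x, ⟨T, hT, hx⟩, rfl⟩
      exact Set.mem_iUnion₂.mpr ⟨T, hT, ⟨x, hx, rfl⟩⟩
    · intro hz
      obtain ⟨T, hT, x, hx, rfl⟩ := Set.mem_iUnion₂.mp hz
      exact ⟨x, ⟨T, hT, hx⟩, rfl⟩
  · intro S z hz
    refine ⟨G.mul z (G.inv z), ⟨z, hz, G.inv z, ⟨z, hz, rfl⟩, (G.d_inv z).symm, rfl⟩,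
      z, hz, ?_, ?_⟩
    · rw [G.r_mul _ _ (G.d_inv z).symm, G.r_inv]
    · rw [G.mul_inv, G.u_mul]
end

section
/- In an SGF-quantale, the incidence relation on pairs (p, f) with p a prime element of Q_e and d(f) ≰ p, defined by (p,f) ∼ (q,g) iff p = q and there exists h ≤ d(f) ∧ d(g) with h ≰ p and h·f ≤ p·f ∨ g, is an equivalence relation. -/
/-- A partial unit: both `f` and `star f` are functional. -/
def IsPU {Q : Type*} [UIQuantale Q] (f : Q) : Prop :=
  star f * f ≤ 1 ∧ f * star f ≤ 1

/-- A prime element of `Q_e`. -/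
def IsPrimeE {Q : Type*} [UIQuantale Q] (p : Q) : Prop :=
  p ≤ 1 ∧ p ≠ 1 ∧ ∀ h k : Q, h ≤ 1 → k ≤ 1 → h ⊓ k ≤ p → h ≤ p ∨ k ≤ p

/-- An SGF-quantale: a unital involutive quantale which is join-generated by its
partial units (SGF1), satisfies `f = f f* f` for partial units (SGF2), and the
separation axiom SGF3. -/
class SGFQuantale (Q : Type*) extends UIQuantale Q where
  sgf1 : ∀ a : Q, a = sSup {f | IsPU f ∧ f ≤ a}
  sgf2 : ∀ f : Q, IsPU f → f * star f * f = f
  sgf3 : ∀ f g h : Q, IsPU f → IsPU g → h ≤ 1 → f ≤ h * ⊤ ⊔ g → f ≤ h * f ⊔ g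

/-- The incidence relation: `f` and `g` are incident at `p` if some `h ≤ d(f) ⊓ d(g)`
with `h ≰ p` satisfies `h f ≤ p f ⊔ g`. -/
def Incident {Q : Type*} [SGFQuantale Q] (p f g : Q) : Prop :=
  ∃ h : Q, h ≤ (f * star f) ⊓ (g * star g) ∧ ¬ h ≤ p ∧ h * f ≤ p * f ⊔ g

/-- The incidence domain: pairs `(p, f)` with `p` prime in `Q_e`, `f` a partial unit,
and `d(f) = f f* ≰ p`. -/
def IncDom (Q : Type*) [SGFQuantale Q] :=
  {pf : Q × Q // IsPrimeE pf.1 ∧ IsPU pf.2 ∧ ¬ pf.2 * star pf.2 ≤ pf.1}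

/-- The incidence relation on the incidence domain. -/
def IncRel (Q : Type*) [SGFQuantale Q] (a b : IncDom Q) : Prop :=
  a.1.1 = b.1.1 ∧ Incident a.1.1 a.1.2 b.1.2

section Aux

variable {Q : Type*} [UIQuantale Q]

lemma UIQ.mul_sup (a b c : Q) : a * (b ⊔ c) = a * b ⊔ a * c := by
  have h := UIQuantale.mul_sSup a {b, c}
  rw [sSup_pair, iSup_pair] at h
  exact h

lemma UIQ.sup_mul (a b c : Q) : (b ⊔ c) * a = b * a ⊔ c * a := by
  have h := UIQuantale.sSup_mul a {b, c}
  rw [sSup_pair, iSup_pair] at h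
  exact h

lemma UIQ.star_sup (b c : Q) : star (b ⊔ c) = star b ⊔ star c := by
  have h := UIQuantale.star_sSup ({b, c} : Set Q)
  rw [sSup_pair, iSup_pair] at h
  exact h

instance : CovariantClass Q Q (· * ·) (· ≤ ·) :=
  ⟨fun a b c h => by
    have : a * (b ⊔ c) = a * b ⊔ a * c := UIQ.mul_sup a b c
    rw [sup_eq_right.mpr h] at this
    rw [this]; exact le_sup_left⟩

instance : CovariantClass Q Q (Function.swap (· * ·)) (· ≤ ·) :=
  ⟨fun a b c h => by
    have : (b ⊔ c) * a = b * a ⊔ c * a := UIQ.sup_mul a b c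
    rw [sup_eq_right.mpr h] at this
    simp only [Function.swap]
    rw [this]; exact le_sup_left⟩

end Aux

section SGF

variable {Q : Type*} [SGFQuantale Q]

/-- A partial unit below `1` is self-adjoint and idempotent. -/
lemma SGF.pu_le_one {u : Q} (hu : IsPU u) (h1 : u ≤ 1) :
    star u = u ∧ u * u = u := by
  have hu1 : star u ≤ 1 := by
    have := UIQ.star_mono h1
    simpa using this
  have e1 : u * star u ≤ u := by
    calc u * star u ≤ u * 1 := mul_le_mul_right hu1 u
    _ = u := mul_one u
  have e2 : u ≤ u * star u := by
    conv_lhs => rw [← SGFQuantale.sgf2 u hu]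
    calc u * star u * u ≤ u * star u * 1 := mul_le_mul_right h1 _
    _ = u * star u := mul_one _
  have e : u * star u = u := le_antisymm e1 e2
  have hle : u ≤ star u := by
    calc u = u * star u := e.symm
    _ ≤ 1 * star u := mul_le_mul_left h1 _
    _ = star u := one_mul _
  have hstar : star u = u := by
    refine le_antisymm ?_ hle
    have := UIQ.star_mono hle
    simpa using this
  refine ⟨hstar, ?_⟩
  calc u * u = u * star u := by rw [hstar]
  _ = u := e

/-- Every element below `1` is self-adjoint. -/
lemma SGF.sub1_star {c : Q} (hc : c ≤ 1) : star c = c := by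
  have hd := SGFQuantale.sgf1 c
  set S : Set Q := {f | IsPU f ∧ f ≤ c} with hS
  calc star c = star (sSup S) := by rw [← hd]
  _ = ⨆ u ∈ S, star u := UIQuantale.star_sSup S
  _ = ⨆ u ∈ S, u := by
      refine biSup_congr fun u hu => ?_
      exact (SGF.pu_le_one hu.1 (hu.2.trans hc)).1
  _ = sSup S := (sSup_eq_iSup).symm
  _ = c := hd.symm

/-- Every element below `1` is idempotent. -/
lemma SGF.sub1_idem {c : Q} (hc : c ≤ 1) : c * c = c := by
  refine le_antisymm ?_ ?_
  · calc c * c ≤ 1 * c := mul_le_mul_left hc c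
    _ = c := one_mul c
  · have hd := SGFQuantale.sgf1 c
    set S : Set Q := {f | IsPU f ∧ f ≤ c} with hS
    conv_lhs => rw [hd]
    refine sSup_le fun u hu => ?_
    have h1 : u ≤ 1 := hu.2.trans hc
    have := (SGF.pu_le_one hu.1 h1).2
    calc u = u * u := this.symm
    _ ≤ c * c := mul_le_mul' hu.2 hu.2

/-- Core symmetry computation. -/
lemma SGF.sym_core {p f g h : Q} (hf : IsPU f) (hg : IsPU g) (hp : p ≤ 1)
    (hhf : h ≤ f * star f) (hrel : h * f ≤ p * f ⊔ g) :
    h * g ≤ p * g ⊔ f := by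
  have h1 : h ≤ 1 := hhf.trans hf.2
  have hst : star h = h := SGF.sub1_star h1
  have hid : h * h = h := SGF.sub1_idem h1
  have pst : star p = p := SGF.sub1_star hp
  have key : h ≤ p ⊔ h * f * star g := by
    calc h = h * h * h := by rw [hid, hid]
    _ ≤ h * (f * star f) * h := mul_le_mul_left (mul_le_mul_right hhf h) h
    _ = (h * f) * (star f * h) := by rw [← mul_assoc, mul_assoc (h*f)]
    _ = (h * f) * star (h * f) := by rw [star_mul, hst]
    _ ≤ (h * f) * star (p * f ⊔ g) := mul_le_mul_right (UIQ.star_mono hrel) _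
    _ = (h * f) * (star f * p ⊔ star g) := by rw [UIQ.star_sup, star_mul, pst]
    _ = (h * f) * (star f * p) ⊔ (h * f) * star g := UIQ.mul_sup _ _ _
    _ ≤ p ⊔ h * f * star g := by
        refine sup_le_sup ?_ le_rfl
        calc h * f * (star f * p) = h * (f * star f) * p := by
              simp only [mul_assoc]
        _ ≤ 1 * 1 * p := mul_le_mul_left (mul_le_mul' h1 hf.2) p
        _ = p := by rw [mul_one, one_mul]
  calc h * g ≤ (p ⊔ h * f * star g) * g := mul_le_mul_left key g
  _ = p * g ⊔ h * f * (star g * g) := by rw [UIQ.sup_mul, mul_assoc (h*f)]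
  _ ≤ p * g ⊔ h * f * 1 := sup_le_sup le_rfl (mul_le_mul_right hg.1 _)
  _ = p * g ⊔ h * f := by rw [mul_one]
  _ ≤ p * g ⊔ 1 * f := sup_le_sup le_rfl (mul_le_mul_left h1 f)
  _ = p * g ⊔ f := by rw [one_mul]

end SGF

/-- In an SGF-quantale, the incidence relation is an equivalence relation on the
incidence domain. -/
theorem stmt11 (Q : Type*) [SGFQuantale Q] : Equivalence (IncRel Q) := by
  constructor
  · -- reflexivity
    rintro ⟨⟨p, f⟩, hp, hf, hdf⟩
    refine ⟨rfl, f * star f, le_inf le_rfl le_rfl, hdf, ?_⟩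
    rw [SGFQuantale.sgf2 f hf]
    exact le_sup_right
  · -- symmetry
    rintro ⟨⟨p, f⟩, hp, hf, hdf⟩ ⟨⟨q, g⟩, hq, hg, hdg⟩ ⟨hpq, h, hdom, hnp, hrel⟩
    simp only at hpq hdom hnp hrel ⊢
    subst hpq
    refine ⟨rfl, h, le_inf (hdom.trans inf_le_right) (hdom.trans inf_le_left), hnp, ?_⟩
    exact SGF.sym_core hf hg hp.1 (hdom.trans inf_le_left) hrel
  · -- transitivity
    rintro ⟨⟨p, f⟩, hp, hf, hdf⟩ ⟨⟨q, g⟩, hq, hg, hdg⟩ ⟨⟨r, k⟩, hr, hk, hdk⟩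
      ⟨hpq, h₁, hdom₁, hnp₁, hrel₁⟩ ⟨hqr, h₂, hdom₂, hnp₂, hrel₂⟩
    simp only at hpq hqr hdom₁ hnp₁ hrel₁ hdom₂ hnp₂ hrel₂ ⊢
    subst hpq; subst hqr
    set h : Q := h₁ ⊓ h₂ with hh
    have h₁1 : h₁ ≤ 1 := (hdom₁.trans inf_le_left).trans hf.2
    have h₂1 : h₂ ≤ 1 := (hdom₂.trans inf_le_left).trans hg.2
    have h1 : h ≤ 1 := inf_le_left.trans h₁1
    have hid : h * h = h := SGF.sub1_idem h1
    refine ⟨rfl, h, le_inf ((inf_le_left).trans (hdom₁.trans inf_le_left))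
      ((inf_le_right).trans (hdom₂.trans inf_le_right)), ?_, ?_⟩
    · intro hcon
      rcases hp.2.2 h₁ h₂ h₁1 h₂1 hcon with h' | h'
      · exact hnp₁ h'
      · exact hnp₂ h'
    · -- h * f ≤ p * f ⊔ k
      have step1 : h * f ≤ p * f ⊔ h * g := by
        calc h * f = h * (h * f) := by rw [← mul_assoc, hid]
        _ ≤ h * (h₁ * f) := mul_le_mul_right (mul_le_mul_left inf_le_left f) h
        _ ≤ h * (p * f ⊔ g) := mul_le_mul_right hrel₁ h
        _ = h * (p * f) ⊔ h * g := UIQ.mul_sup _ _ _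
        _ ≤ 1 * (p * f) ⊔ h * g := sup_le_sup (mul_le_mul_left h1 _) le_rfl
        _ = p * f ⊔ h * g := by rw [one_mul]
      have step2 : h * g ≤ p * g ⊔ k := by
        calc h * g = h * (h * g) := by rw [← mul_assoc, hid]
        _ ≤ h * (h₂ * g) := mul_le_mul_right (mul_le_mul_left inf_le_right g) h
        _ ≤ h * (p * g ⊔ k) := mul_le_mul_right hrel₂ h
        _ = h * (p * g) ⊔ h * k := UIQ.mul_sup _ _ _
        _ ≤ 1 * (p * g) ⊔ 1 * k := sup_le_sup (mul_le_mul_left h1 _) (mul_le_mul_left h1 _)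
        _ = p * g ⊔ k := by rw [one_mul, one_mul]
      have step3 : h * f ≤ p * ⊤ ⊔ k := by
        calc h * f ≤ p * f ⊔ (p * g ⊔ k) := step1.trans (sup_le_sup le_rfl step2)
        _ ≤ p * ⊤ ⊔ (p * ⊤ ⊔ k) :=
            sup_le_sup (mul_le_mul_right le_top p)
              (sup_le_sup (mul_le_mul_right le_top p) le_rfl)
        _ = p * ⊤ ⊔ k := by rw [← sup_assoc, sup_idem]
      -- decompose h * f into partial units and apply SGF3
      have hdcmp := SGFQuantale.sgf1 (h * f)
      conv_lhs => rw [hdcmp]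
      refine sSup_le fun v hv => ?_
      have hv3 := SGFQuantale.sgf3 v k p hv.1 hk hp.1 ((hv.2.trans step3))
      calc v ≤ p * v ⊔ k := hv3
      _ ≤ p * (h * f) ⊔ k := sup_le_sup (mul_le_mul_right hv.2 p) le_rfl
      _ ≤ p * (1 * f) ⊔ k := sup_le_sup (mul_le_mul_right (mul_le_mul_left h1 f) p) le_rfl
      _ = p * f ⊔ k := by rw [one_mul]
end

section
/- In an SGF-quantale, the incidence relation is a congruence for composition: if f ∼_p g and f' ∼_{f[p]} g', then f·f' ∼_p g·g'. Moreover it is compatible with involution: f ∼_p g if and only if f* ∼_{f[p]} g*. -/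
section Helpers
variable {Q : Type*} [UIQuantale Q]

lemma qmul_sup (a x y : Q) : a * (x ⊔ y) = a * x ⊔ a * y := by
  have := UIQuantale.mul_sSup a {x, y}
  simpa [sSup_pair, iSup_or, iSup_sup_eq] using this

lemma qsup_mul (a x y : Q) : (x ⊔ y) * a = x * a ⊔ y * a := by
  have := UIQuantale.sSup_mul a {x, y}
  simpa [sSup_pair, iSup_or, iSup_sup_eq] using this

lemma qstar_sup (x y : Q) : star (x ⊔ y) = star x ⊔ star y := by
  have := UIQuantale.star_sSup ({x, y} : Set Q)
  simpa [sSup_pair, iSup_or, iSup_sup_eq] using this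

lemma qmul_le_l {x y : Q} (a : Q) (h : x ≤ y) : a * x ≤ a * y := by
  have : a * (x ⊔ y) = a * x ⊔ a * y := qmul_sup a x y
  rw [sup_eq_right.2 h] at this
  rw [this]; exact le_sup_left

lemma qmul_le_r {x y : Q} (a : Q) (h : x ≤ y) : x * a ≤ y * a := by
  have : (x ⊔ y) * a = x * a ⊔ y * a := qsup_mul a x y
  rw [sup_eq_right.2 h] at this
  rw [this]; exact le_sup_left

lemma qmul_le_mul {x y z w : Q} (h : x ≤ y) (h' : z ≤ w) : x * z ≤ y * w :=
  le_trans (qmul_le_l x h') (qmul_le_r w h)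

lemma qstar_le {x y : Q} (h : x ≤ y) : star x ≤ star y := by
  have : star (x ⊔ y) = star x ⊔ star y := qstar_sup x y
  rw [sup_eq_right.2 h] at this
  rw [this]; exact le_sup_left

lemma qbot_mul (a : Q) : (⊥ : Q) * a = ⊥ := by
  have := UIQuantale.sSup_mul a (∅ : Set Q)
  simpa using this

lemma qstar_top : star (⊤ : Q) = ⊤ := by
  have h : (⊤ : Q) ≤ star ⊤ := by
    calc (⊤ : Q) = star (star ⊤) := (star_star _).symm
    _ ≤ star ⊤ := qstar_le le_top
  exact le_antisymm le_top h

lemma pu_star {f : Q} (hf : IsPU f) : IsPU (star f) := by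
  constructor
  · rw [star_star]; exact hf.2
  · rw [star_star]; exact hf.1

lemma pu_mul {f g : Q} (hf : IsPU f) (hg : IsPU g) : IsPU (f * g) := by
  constructor
  · rw [star_mul]
    calc star g * star f * (f * g) = star g * (star f * f) * g := by
          simp [mul_assoc]
    _ ≤ star g * 1 * g := by
          apply qmul_le_r; apply qmul_le_l; exact hf.1
    _ = star g * g := by rw [mul_one]
    _ ≤ 1 := hg.1
  · rw [star_mul]
    calc f * g * (star g * star f) = f * (g * star g) * star f := by
          simp [mul_assoc]
    _ ≤ f * 1 * star f := by
          apply qmul_le_r; apply qmul_le_l; exact hg.2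
    _ = f * star f := by rw [mul_one]
    _ ≤ 1 := hf.2

lemma qmul_bot (a : Q) : a * (⊥ : Q) = ⊥ := by
  have := UIQuantale.mul_sSup a (∅ : Set Q)
  simpa using this

lemma pu_bot : IsPU (⊥ : Q) := by
  constructor
  · rw [qmul_bot]; exact bot_le
  · rw [qbot_mul]; exact bot_le

end Helpers

section SGFHelpers
variable {Q : Type*} [SGFQuantale Q]

lemma pu_le_one_star {f : Q} (hf : IsPU f) (h1 : f ≤ 1) : star f = f := by
  have e := SGFQuantale.sgf2 f hf
  have h2 : f ≤ star f := by
    calc f = f * star f * f := e.symm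
    _ ≤ 1 * star f * 1 := by
          apply qmul_le_mul _ h1
          exact qmul_le_r _ h1
    _ = star f := by rw [one_mul, mul_one]
  have h3 : star f ≤ f := by
    calc star f ≤ star (star f) := qstar_le h2
    _ = f := star_star f
  exact le_antisymm h3 h2

lemma subid_star_le {a : Q} (ha : a ≤ 1) : star a ≤ a := by
  conv_lhs => rw [SGFQuantale.sgf1 a]
  rw [UIQuantale.star_sSup]
  apply iSup₂_le
  intro f hf
  rw [pu_le_one_star hf.1 (hf.2.trans ha)]
  exact hf.2

lemma subid_star {a : Q} (ha : a ≤ 1) : star a = a := by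
  have h2 : star a ≤ 1 := by
    calc star a ≤ star 1 := qstar_le ha
    _ = 1 := star_one Q
  apply le_antisymm (subid_star_le ha)
  calc a = star (star a) := (star_star a).symm
  _ ≤ star a := subid_star_le h2

lemma subid_mul {a b : Q} (ha : a ≤ 1) (hb : b ≤ 1) : a * b = a ⊓ b := by
  apply le_antisymm
  · exact le_inf (by calc a * b ≤ a * 1 := qmul_le_l a hb
                        _ = a := mul_one a)
                 (by calc a * b ≤ 1 * b := qmul_le_r b ha
                        _ = b := one_mul b)
  · conv_lhs => rw [SGFQuantale.sgf1 (a ⊓ b)]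
    apply sSup_le
    rintro f ⟨hfpu, hfle⟩
    have hf1 : f ≤ 1 := hfle.trans (inf_le_left.trans ha)
    have hfs : star f = f := pu_le_one_star hfpu hf1
    calc f = f * star f * f := (SGFQuantale.sgf2 f hfpu).symm
    _ = f * f * f := by rw [hfs]
    _ ≤ a * b * 1 := qmul_le_mul (qmul_le_mul (hfle.trans inf_le_left) (hfle.trans inf_le_right)) hf1
    _ = a * b := mul_one _

lemma subid_pu {a : Q} (ha : a ≤ 1) : IsPU a := by
  have hs : star a = a := subid_star ha
  constructor
  · rw [hs, subid_mul ha ha]; exact inf_le_left.trans ha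
  · rw [hs, subid_mul ha ha]; exact inf_le_left.trans ha

lemma subid_absorb_l {x y : Q} (hx : x ≤ 1) (hy : y ≤ 1) (h : y ≤ x) : x * y = y := by
  rw [subid_mul hx hy]; exact inf_eq_right.2 h

lemma subid_absorb_r {x y : Q} (hx : x ≤ 1) (hy : y ≤ 1) (h : y ≤ x) : y * x = y := by
  rw [subid_mul hy hx]; exact inf_eq_left.2 h

/-- a subidentity below `p * ⊤` is below `p`. -/
lemma subid_le_of_le_mul_top {a p : Q} (ha : a ≤ 1) (hp : p ≤ 1) (h : a ≤ p * ⊤) : a ≤ p := by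
  have h3 := SGFQuantale.sgf3 a ⊥ p (subid_pu ha) pu_bot hp (by simpa using h)
  calc a ≤ p * a ⊔ ⊥ := h3
  _ = p * a := by rw [sup_bot_eq]
  _ ≤ p * 1 := qmul_le_l p ha
  _ = p := mul_one p

end SGFHelpers

section Core
variable {Q : Type*} [SGFQuantale Q]
variable {p q f g h h' : Q}

/-- star of the incidence inequality. -/
lemma star_inc (hp1 : p ≤ 1) (h1 : h ≤ 1) (hinc : h * f ≤ p * f ⊔ g) :
    star f * h ≤ star f * p ⊔ star g := by
  have := qstar_le hinc
  rw [qstar_sup, star_mul, star_mul, subid_star h1, subid_star hp1] at this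
  exact this

/-- transport relation, starred. -/
lemma star_transport (hp1 : p ≤ 1) (hq1 : q ≤ 1) (hpq : p * f = f * q) :
    star f * p = q * star f := by
  have := congrArg star hpq
  rw [star_mul, star_mul, subid_star hp1, subid_star hq1] at this
  exact this

/-- symmetric incidence: `h g ≤ p g ⊔ f`. -/
lemma sym_inc (hp1 : p ≤ 1) (hf : IsPU f) (hg : IsPU g)
    (hdf : h ≤ f * star f) (hinc : h * f ≤ p * f ⊔ g) :
    h * g ≤ p * g ⊔ f := by
  have h1 : h ≤ 1 := hdf.trans hf.2
  have hsf : star f * h ≤ star f * p ⊔ star g := star_inc hp1 h1 hinc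
  have e1 : (f * star f) * h = h := subid_absorb_l hf.2 h1 hdf
  calc h * g = ((f * star f) * h) * g := by rw [e1]
  _ = f * ((star f * h) * g) := by simp [mul_assoc]
  _ ≤ f * ((star f * p ⊔ star g) * g) := qmul_le_l f (qmul_le_r g hsf)
  _ = f * ((star f * p) * g ⊔ star g * g) := by rw [qsup_mul]
  _ = f * ((star f * p) * g) ⊔ f * (star g * g) := by rw [qmul_sup]
  _ ≤ p * g ⊔ f := by
      apply sup_le_sup
      · calc f * ((star f * p) * g) = ((f * star f) * p) * g := by simp [mul_assoc]
        _ ≤ (1 * p) * g := qmul_le_r g (qmul_le_r p hf.2)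
        _ = p * g := by rw [one_mul]
      · calc f * (star g * g) ≤ f * 1 := qmul_le_l f hg.1
        _ = f := mul_one f

/-- `f* h f ≰ q`. -/
lemma fconj_not_le_q (hp1 : p ≤ 1) (hq1 : q ≤ 1) (hf : IsPU f)
    (h1 : h ≤ 1) (hdf : h ≤ f * star f) (hnp : ¬ h ≤ p) (hpq : p * f = f * q) :
    ¬ star f * (h * f) ≤ q := by
  intro hle
  apply hnp
  have e1 : (f * star f) * h = h := subid_absorb_l hf.2 h1 hdf
  have e2 : h * (f * star f) = h := subid_absorb_r hf.2 h1 hdf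
  have e : f * ((star f * (h * f)) * star f) = h := by
    calc f * ((star f * (h * f)) * star f) = (f * star f) * (h * (f * star f)) := by
          simp [mul_assoc]
    _ = (f * star f) * h := by rw [e2]
    _ = h := e1
  calc h = f * ((star f * (h * f)) * star f) := e.symm
  _ ≤ f * (q * star f) := qmul_le_l f (qmul_le_r (star f) hle)
  _ = f * (star f * p) := by rw [← star_transport hp1 hq1 hpq]
  _ = (f * star f) * p := (mul_assoc _ _ _).symm
  _ ≤ 1 * p := qmul_le_r p hf.2
  _ = p := one_mul p

/-- `g* h g ≰ q`: the germ transports along `g` as well. -/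
lemma gconj_not_le_q (hp : IsPrimeE p) (hq1 : q ≤ 1) (hf : IsPU f) (hg : IsPU g)
    (h1 : h ≤ 1) (hdf : h ≤ f * star f) (hdg : h ≤ g * star g)
    (hnp : ¬ h ≤ p) (hinc : h * f ≤ p * f ⊔ g) (hpq : p * f = f * q) :
    ¬ star g * (h * g) ≤ q := by
  intro hcg
  have hp1 := hp.1
  have e1 : (f * star f) * h = h := subid_absorb_l hf.2 h1 hdf
  have e2 : h * (f * star f) = h := subid_absorb_r hf.2 h1 hdf
  have e2g : h * (g * star g) = h := subid_absorb_r hg.2 h1 hdg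
  have hh : h * h = h := by rw [subid_mul h1 h1, inf_idem]
  have tpu : IsPU (star f * (h * g)) := pu_mul (pu_star hf) (pu_mul (subid_pu h1) hg)
  have estar : star (star f * (h * g)) = (star g * h) * f := by
    rw [star_mul, star_star, star_mul, subid_star h1]
  have ett : star (star f * (h * g)) * (star f * (h * g)) = star g * (h * g) := by
    rw [estar]
    calc ((star g * h) * f) * (star f * (h * g))
        = star g * ((h * (f * star f)) * (h * g)) := by simp [mul_assoc]
      _ = star g * (h * (h * g)) := by rw [e2]
      _ = star g * ((h * h) * g) := by rw [← mul_assoc h h g]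
      _ = star g * (h * g) := by rw [hh]
  have ess : (star f * (h * g)) * star (star f * (h * g)) = star f * (h * f) := by
    rw [estar]
    calc (star f * (h * g)) * ((star g * h) * f)
        = star f * ((h * (g * star g)) * (h * f)) := by simp [mul_assoc]
      _ = star f * (h * (h * f)) := by rw [e2g]
      _ = star f * ((h * h) * f) := by rw [← mul_assoc h h f]
      _ = star f * (h * f) := by rw [hh]
  have hsg2 := SGFQuantale.sgf2 _ tpu
  have ht : (star f * (h * g)) ≤ (star f * (h * g)) * q := by
    calc (star f * (h * g))
        = ((star f * (h * g)) * star (star f * (h * g))) * (star f * (h * g)) := hsg2.symm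
    _ = (star f * (h * g)) * (star (star f * (h * g)) * (star f * (h * g))) := mul_assoc _ _ _
    _ = (star f * (h * g)) * (star g * (h * g)) := by rw [ett]
    _ ≤ (star f * (h * g)) * q := qmul_le_l _ hcg
  have eh : f * ((star f * (h * f)) * star f) = h := by
    calc f * ((star f * (h * f)) * star f) = (f * star f) * (h * (f * star f)) := by
          simp [mul_assoc]
    _ = (f * star f) * h := by rw [e2]
    _ = h := e1
  have hm : h * g ≤ p * g ⊔ f := sym_inc hp1 hf hg hdf hinc
  have hsm : star g * h ≤ star g * p ⊔ star f := by
    have := qstar_le hm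
    rw [qstar_sup, star_mul, star_mul, subid_star h1, subid_star hp1] at this
    exact this
  have eft : f * (star f * (h * g)) = h * g := by
    calc f * (star f * (h * g)) = ((f * star f) * h) * g := by simp [mul_assoc]
    _ = h * g := by rw [e1]
  have key : h ≤ p * ⊤ := by
    calc h = f * ((star f * (h * f)) * star f) := eh.symm
    _ = f * (((star f * (h * g)) * star (star f * (h * g))) * star f) := by rw [ess]
    _ ≤ f * ((((star f * (h * g)) * q) * star (star f * (h * g))) * star f) := by
        apply qmul_le_l; apply qmul_le_r; apply qmul_le_r; exact ht
    _ = (f * (star f * (h * g))) * (q * (star (star f * (h * g)) * star f)) := by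
        simp [mul_assoc]
    _ = (h * g) * (q * (star g * h)) := by
        rw [← star_mul, eft, star_mul h g, subid_star h1]
    _ ≤ (p * g ⊔ f) * (q * (star g * p ⊔ star f)) := qmul_le_mul hm (qmul_le_l q hsm)
    _ = ((p * g) * (q * (star g * p)) ⊔ (p * g) * (q * star f)) ⊔
          (f * (q * (star g * p)) ⊔ f * (q * star f)) := by
        rw [qmul_sup q, qsup_mul, qmul_sup, qmul_sup]
    _ ≤ p * ⊤ := by
        apply sup_le <;> apply sup_le
        · calc (p * g) * (q * (star g * p)) = p * (g * (q * (star g * p))) := mul_assoc _ _ _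
          _ ≤ p * ⊤ := qmul_le_l p le_top
        · calc (p * g) * (q * star f) = p * (g * (q * star f)) := mul_assoc _ _ _
          _ ≤ p * ⊤ := qmul_le_l p le_top
        · calc f * (q * (star g * p)) = (f * q) * (star g * p) := (mul_assoc _ _ _).symm
          _ = (p * f) * (star g * p) := by rw [← hpq]
          _ = p * (f * (star g * p)) := mul_assoc _ _ _
          _ ≤ p * ⊤ := qmul_le_l p le_top
        · calc f * (q * star f) = (f * q) * star f := (mul_assoc _ _ _).symm
          _ = (p * f) * star f := by rw [← hpq]
          _ = p * (f * star f) := mul_assoc _ _ _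
          _ ≤ p * ⊤ := qmul_le_l p le_top
  exact hnp (subid_le_of_le_mul_top h1 hp1 key)

end Core

section Main
variable {Q : Type*} [SGFQuantale Q]
variable {p q f g f' g' : Q}

lemma incident_star (hp : IsPrimeE p) (hq : IsPrimeE q) (hf : IsPU f) (hg : IsPU g)
    (hpq : p * f = f * q) : Incident p f g → Incident q (star f) (star g) := by
  rintro ⟨h, hle, hnp, hinc⟩
  have hdf : h ≤ f * star f := hle.trans inf_le_left
  have hdg : h ≤ g * star g := hle.trans inf_le_right
  have h1 : h ≤ 1 := hdf.trans hf.2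
  have hs1 : star f * (h * f) ≤ 1 := by
    calc star f * (h * f) ≤ star f * (1 * f) := qmul_le_l _ (qmul_le_r f h1)
    _ = star f * f := by rw [one_mul]
    _ ≤ 1 := hf.1
  have hc1 : star g * (h * g) ≤ 1 := by
    calc star g * (h * g) ≤ star g * (1 * g) := qmul_le_l _ (qmul_le_r g h1)
    _ = star g * g := by rw [one_mul]
    _ ≤ 1 := hg.1
  have hsq : ¬ star f * (h * f) ≤ q := fconj_not_le_q hp.1 hq.1 hf h1 hdf hnp hpq
  have hcq : ¬ star g * (h * g) ≤ q := gconj_not_le_q hp hq.1 hf hg h1 hdf hdg hnp hinc hpq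
  refine ⟨(star f * (h * f)) * (star g * (h * g)), ?_, ?_, ?_⟩
  · rw [star_star, star_star]
    refine le_inf ?_ ?_
    · calc (star f * (h * f)) * (star g * (h * g)) ≤ (star f * (h * f)) * 1 :=
            qmul_le_l _ hc1
      _ = star f * (h * f) := mul_one _
      _ ≤ star f * (1 * f) := qmul_le_l _ (qmul_le_r f h1)
      _ = star f * f := by rw [one_mul]
    · calc (star f * (h * f)) * (star g * (h * g)) ≤ 1 * (star g * (h * g)) :=
            qmul_le_r _ hs1
      _ = star g * (h * g) := one_mul _
      _ ≤ star g * (1 * g) := qmul_le_l _ (qmul_le_r g h1)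
      _ = star g * g := by rw [one_mul]
  · rw [subid_mul hs1 hc1]
    intro hk
    rcases hq.2.2 _ _ hs1 hc1 hk with h' | h'
    · exact hsq h'
    · exact hcq h'
  · have e2 : h * (f * star f) = h := subid_absorb_r hf.2 h1 hdf
    calc ((star f * (h * f)) * (star g * (h * g))) * star f
        ≤ ((star f * (h * f)) * 1) * star f := qmul_le_r _ (qmul_le_l _ hc1)
    _ = (star f * (h * f)) * star f := by rw [mul_one]
    _ = star f * (h * (f * star f)) := by simp [mul_assoc]
    _ = star f * h := by rw [e2]
    _ ≤ star f * p ⊔ star g := star_inc hp.1 h1 hinc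
    _ = q * star f ⊔ star g := by rw [star_transport hp.1 hq.1 hpq]

lemma incident_comp (hp : IsPrimeE p) (hq : IsPrimeE q)
    (hf : IsPU f) (hg : IsPU g) (hf' : IsPU f') (hg' : IsPU g')
    (hrf : ¬ star f * f ≤ q) (hpq : p * f = f * q) :
    Incident p f g → Incident q f' g' → Incident p (f * f') (g * g') := by
  rintro ⟨h, hle, hnp, hinc⟩ ⟨h', hle', hnq, hinc'⟩
  have hdf : h ≤ f * star f := hle.trans inf_le_left
  have hdg : h ≤ g * star g := hle.trans inf_le_right
  have h1 : h ≤ 1 := hdf.trans hf.2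
  have hdf' : h' ≤ f' * star f' := hle'.trans inf_le_left
  have hdg' : h' ≤ g' * star g' := hle'.trans inf_le_right
  have h'1 : h' ≤ 1 := hdf'.trans hf'.2
  -- b = f h' f*, c = g h' g*
  have hb1 : f * (h' * star f) ≤ 1 := by
    calc f * (h' * star f) ≤ f * (1 * star f) := qmul_le_l f (qmul_le_r _ h'1)
    _ = f * star f := by rw [one_mul]
    _ ≤ 1 := hf.2
  have hc1 : g * (h' * star g) ≤ 1 := by
    calc g * (h' * star g) ≤ g * (1 * star g) := qmul_le_l g (qmul_le_r _ h'1)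
    _ = g * star g := by rw [one_mul]
    _ ≤ 1 := hg.2
  have hr1 : star f * f ≤ 1 := hf.1
  have hbp : ¬ f * (h' * star f) ≤ p := by
    intro hble
    have e : star f * ((f * (h' * star f)) * f) = (star f * f) ⊓ h' := by
      calc star f * ((f * (h' * star f)) * f)
          = (star f * f) * (h' * (star f * f)) := by simp [mul_assoc]
      _ = (star f * f) * (h' ⊓ (star f * f)) := by rw [subid_mul h'1 hr1]
      _ = (star f * f) ⊓ (h' ⊓ (star f * f)) := subid_mul hr1 (inf_le_right.trans hr1)
      _ = (star f * f) ⊓ h' := by rw [inf_comm h' _, ← inf_assoc, inf_idem]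
    have hle2 : (star f * f) ⊓ h' ≤ q := by
      rw [← e]
      calc star f * ((f * (h' * star f)) * f) ≤ star f * (p * f) :=
            qmul_le_l _ (qmul_le_r f hble)
      _ = star f * (f * q) := by rw [hpq]
      _ = (star f * f) * q := (mul_assoc _ _ _).symm
      _ ≤ 1 * q := qmul_le_r q hr1
      _ = q := one_mul q
    rcases hq.2.2 _ _ hr1 h'1 hle2 with h2 | h2
    · exact hrf h2
    · exact hnq h2
  have ha1 : h * (f * (h' * star f)) ≤ 1 := by
    calc h * (f * (h' * star f)) ≤ 1 * 1 := qmul_le_mul h1 hb1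
    _ = 1 := one_mul 1
  have hcp : ¬ g * (h' * star g) ≤ p := by
    intro hcle
    have hna : ¬ h * (f * (h' * star f)) ≤ p := by
      rw [subid_mul h1 hb1]
      intro hk
      rcases hp.2.2 _ _ h1 hb1 hk with h2 | h2
      · exact hnp h2
      · exact hbp h2
    have step1 : h * (f * (h' * star f)) ≤ p * ⊤ ⊔ g * (h' * star f) := by
      calc h * (f * (h' * star f)) = (h * f) * (h' * star f) := (mul_assoc _ _ _).symm
      _ ≤ (p * f ⊔ g) * (h' * star f) := qmul_le_r _ hinc
      _ = (p * f) * (h' * star f) ⊔ g * (h' * star f) := qsup_mul _ _ _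
      _ ≤ p * ⊤ ⊔ g * (h' * star f) := by
          apply sup_le_sup_right
          calc (p * f) * (h' * star f) = p * (f * (h' * star f)) := mul_assoc _ _ _
          _ ≤ p * ⊤ := qmul_le_l p le_top
    have hXpu : IsPU (g * (h' * star f)) := pu_mul hg (pu_mul (subid_pu h'1) (pu_star hf))
    have step2 := SGFQuantale.sgf3 _ _ p (subid_pu ha1) hXpu hp.1 step1
    have hXa : (g * (h' * star f)) * (h * (f * (h' * star f))) ≤ ⊤ * p := by
      calc (g * (h' * star f)) * (h * (f * (h' * star f)))
          ≤ (g * (h' * star f)) * h := by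
            apply qmul_le_l
            calc h * (f * (h' * star f)) ≤ h * 1 := qmul_le_l h hb1
            _ = h := mul_one h
      _ = g * (h' * (star f * h)) := by simp [mul_assoc]
      _ ≤ g * (h' * (star f * p ⊔ star g)) :=
          qmul_le_l g (qmul_le_l h' (star_inc hp.1 h1 hinc))
      _ = g * (h' * (star f * p)) ⊔ g * (h' * star g) := by rw [qmul_sup h', qmul_sup g]
      _ ≤ ⊤ * p := by
          apply sup_le
          · calc g * (h' * (star f * p)) = g * (h' * (q * star f)) := by
                  rw [star_transport hp.1 hq.1 hpq]
            _ = g * ((h' * q) * star f) := by rw [mul_assoc h' q (star f)]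
            _ ≤ g * (q * star f) := by
                apply qmul_le_l g; apply qmul_le_r
                rw [subid_mul h'1 hq.1]; exact inf_le_right
            _ = g * (star f * p) := by rw [← star_transport hp.1 hq.1 hpq]
            _ = (g * star f) * p := (mul_assoc _ _ _).symm
            _ ≤ ⊤ * p := qmul_le_r p le_top
          · calc g * (h' * star g) ≤ p := hcle
            _ = 1 * p := (one_mul p).symm
            _ ≤ ⊤ * p := qmul_le_r p le_top
    have haa : h * (f * (h' * star f)) ≤ ⊤ * p := by
      have idem : (h * (f * (h' * star f))) * (h * (f * (h' * star f)))
          = h * (f * (h' * star f)) := by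
        rw [subid_mul ha1 ha1, inf_idem]
      calc h * (f * (h' * star f))
          = (h * (f * (h' * star f))) * (h * (f * (h' * star f))) := idem.symm
      _ ≤ (p * (h * (f * (h' * star f))) ⊔ g * (h' * star f)) * (h * (f * (h' * star f))) :=
          qmul_le_r _ step2
      _ = (p * (h * (f * (h' * star f)))) * (h * (f * (h' * star f))) ⊔
          (g * (h' * star f)) * (h * (f * (h' * star f))) := qsup_mul _ _ _
      _ ≤ ⊤ * p := by
          apply sup_le _ hXa
          calc (p * (h * (f * (h' * star f)))) * (h * (f * (h' * star f)))
              ≤ (p * 1) * 1 := qmul_le_mul (qmul_le_l p ha1) ha1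
          _ = p := by rw [mul_one, mul_one]
          _ = 1 * p := (one_mul p).symm
          _ ≤ ⊤ * p := qmul_le_r p le_top
    have hfin : h * (f * (h' * star f)) ≤ p * ⊤ := by
      calc h * (f * (h' * star f)) = star (h * (f * (h' * star f))) := (subid_star ha1).symm
      _ ≤ star (⊤ * p) := qstar_le haa
      _ = p * ⊤ := by rw [star_mul, subid_star hp.1, qstar_top]
    exact hna (subid_le_of_le_mul_top ha1 hp.1 hfin)
  -- the witness
  have hk1 : (h * (f * (h' * star f))) * (g * (h' * star g)) ≤ 1 := by
    calc (h * (f * (h' * star f))) * (g * (h' * star g)) ≤ 1 * 1 := qmul_le_mul ha1 hc1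
    _ = 1 := one_mul 1
  refine ⟨(h * (f * (h' * star f))) * (g * (h' * star g)), ?_, ?_, ?_⟩
  · refine le_inf ?_ ?_
    · calc (h * (f * (h' * star f))) * (g * (h' * star g))
          ≤ (1 * (f * (h' * star f))) * 1 := qmul_le_mul (qmul_le_r _ h1) hc1
      _ = f * (h' * star f) := by rw [one_mul, mul_one]
      _ ≤ f * ((f' * star f') * star f) := qmul_le_l f (qmul_le_r _ hdf')
      _ = (f * f') * star (f * f') := by rw [star_mul]; simp [mul_assoc]
    · calc (h * (f * (h' * star f))) * (g * (h' * star g))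
          ≤ 1 * (g * (h' * star g)) := qmul_le_r _ ha1
      _ = g * (h' * star g) := one_mul _
      _ ≤ g * ((g' * star g') * star g) := qmul_le_l g (qmul_le_r _ hdg')
      _ = (g * g') * star (g * g') := by rw [star_mul]; simp [mul_assoc]
  · intro hk
    rw [subid_mul ha1 hc1] at hk
    rcases hp.2.2 _ _ ha1 hc1 hk with h2 | h2
    · rw [subid_mul h1 hb1] at h2
      rcases hp.2.2 _ _ h1 hb1 h2 with h3 | h3
      · exact hnp h3
      · exact hbp h3
    · exact hcp h2
  · have main : ((h * (f * (h' * star f))) * (g * (h' * star g))) * (f * f')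
        ≤ p * ⊤ ⊔ g * g' := by
      calc ((h * (f * (h' * star f))) * (g * (h' * star g))) * (f * f')
          ≤ ((h * (f * (h' * star f))) * 1) * (f * f') := qmul_le_r _ (qmul_le_l _ hc1)
      _ = (h * (f * (h' * star f))) * (f * f') := by rw [mul_one]
      _ = (h * f) * (h' * ((star f * f) * f')) := by simp [mul_assoc]
      _ ≤ (h * f) * (h' * (1 * f')) := qmul_le_l _ (qmul_le_l h' (qmul_le_r f' hr1))
      _ = (h * f) * (h' * f') := by rw [one_mul]
      _ ≤ (h * f) * (q * f' ⊔ g') := qmul_le_l _ hinc'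
      _ = (h * f) * (q * f') ⊔ (h * f) * g' := qmul_sup _ _ _
      _ ≤ p * ⊤ ⊔ g * g' := by
          apply sup_le
          · calc (h * f) * (q * f') = h * ((f * q) * f') := by simp [mul_assoc]
            _ = h * ((p * f) * f') := by rw [← hpq]
            _ = (h * p) * (f * f') := by simp [mul_assoc]
            _ ≤ p * (f * f') := by
                apply qmul_le_r
                rw [subid_mul h1 hp.1]; exact inf_le_right
            _ ≤ p * ⊤ := qmul_le_l p le_top
            _ ≤ p * ⊤ ⊔ g * g' := le_sup_left
          · calc (h * f) * g' ≤ (p * f ⊔ g) * g' := qmul_le_r g' hinc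
            _ = (p * f) * g' ⊔ g * g' := qsup_mul _ _ _
            _ ≤ p * ⊤ ⊔ g * g' := by
                apply sup_le_sup_right
                calc (p * f) * g' = p * (f * g') := mul_assoc _ _ _
                _ ≤ p * ⊤ := qmul_le_l p le_top
    have hkpu : IsPU (((h * (f * (h' * star f))) * (g * (h' * star g))) * (f * f')) :=
      pu_mul (subid_pu hk1) (pu_mul hf hf')
    have := SGFQuantale.sgf3 _ _ p hkpu (pu_mul hg hg') hp.1 main
    calc ((h * (f * (h' * star f))) * (g * (h' * star g))) * (f * f')
        ≤ p * (((h * (f * (h' * star f))) * (g * (h' * star g))) * (f * f')) ⊔ g * g' := this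
    _ ≤ p * (f * f') ⊔ g * g' := by
        apply sup_le_sup_right
        calc p * (((h * (f * (h' * star f))) * (g * (h' * star g))) * (f * f'))
            ≤ p * (1 * (f * f')) := qmul_le_l p (qmul_le_r _ hk1)
        _ = p * (f * f') := by rw [one_mul]

end Main

/-- The incidence relation is a congruence for composition and is compatible with
involution: if `f ∼_p g` and `f' ∼_{f[p]} g'` then `f f' ∼_p g g'`; moreover
`f ∼_p g` iff `f* ∼_{f[p]} g*`. Here `q = f[p]` is the unique prime with
`r(f) ≰ q` and `p f = f q`. -/
theorem stmt16 (Q : Type*) [SGFQuantale Q] (p q f g f' g' : Q)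
    (hp : IsPrimeE p) (hq : IsPrimeE q)
    (hf : IsPU f) (hg : IsPU g) (hf' : IsPU f') (hg' : IsPU g')
    (hdf : ¬ f * star f ≤ p) (hdg : ¬ g * star g ≤ p)
    (hdf' : ¬ f' * star f' ≤ q) (hdg' : ¬ g' * star g' ≤ q)
    (hrf : ¬ star f * f ≤ q) (hpq : p * f = f * q) :
    (Incident p f g → Incident q f' g' → Incident p (f * f') (g * g')) ∧
    (Incident p f g ↔ Incident q (star f) (star g)) := by
  refine ⟨incident_comp hp hq hf hg hf' hg' hrf hpq, ?_, ?_⟩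
  · exact incident_star hp hq hf hg hpq
  · intro hI
    have h2 : q * star f = star f * p := (star_transport hp.1 hq.1 hpq).symm
    have := incident_star hq hp (pu_star hf) (pu_star hg) h2 hI
    rwa [star_star, star_star] at this
end
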